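/- Let γ ∈ [1/√(σβ), ∞) and α ∈ [1, 2/(1 + max((1-γσ)/(1+γσ), (γβ-1)/(1+γβ)))), and let P : H → H satisfy, for every y ∈ H, that P(y) minimizes x ↦ f(x) + (1/(2γ))·‖x - y‖². Define T(z) = (1 - α)·z + α·(2·P(z) - z). Then for every index j with λ_j = β and every k ≥ 0, ‖T^[k](φ_j)‖ = ρ^k·‖φ_j‖, where ρ = |1 - α| + α·max((1 - γσ)/(1 + γσ), (γβ - 1)/(1 + γβ)). Hence the generalized Douglas-Rachford algorithm applied to minimize f + g with g ≡ 0 converges exactly with rate ρ, so the linear rate bound ρ is tight in this parameter regime. -/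

import Mathlib

/-!
`φ j` with `λ j = β` is an eigenvector of `∇f`, so `prox_{γf}` maps `c • φ j` to
`(c / (1 + γβ)) • φ j`: at that point `w` the prox objective splits as its value at `w` plus the
positive definite form `∑ (λ i / 2 + 1 / (2γ)) ⟪x - w, φ i⟫²`, so `w` is the only minimizer.
Hence the Douglas-Rachford map acts on the line `ℝ φ j` as multiplication by
`1 - α - α (γβ - 1) / (1 + γβ)`. For `γ ≥ 1 / √(σβ)` the `β`-term realises the maximum in `ρ`,
and for `α ≥ 1` the absolute value of this factor is exactly `ρ`.
-/

open RealInnerProductSpace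

namespace HilbertBasis

variable {H ι : Type*} [NormedAddCommGroup H] [InnerProductSpace ℝ H] (φ : HilbertBasis ι ℝ H)

theorem hasSum_inner_sq (v : H) : HasSum (fun i => ⟪v, φ i⟫ ^ 2) (‖v‖ ^ 2) := by
  have h := φ.hasSum_inner_mul_inner v v
  rw [real_inner_self_eq_norm_sq] at h
  simpa only [sq, real_inner_comm (φ _) v] using h

theorem summable_mul_inner_sq {a : ι → ℝ} {M : ℝ} (ha₀ : ∀ i, 0 ≤ a i) (haM : ∀ i, a i ≤ M)
    (v : H) : Summable fun i => a i * ⟪v, φ i⟫ ^ 2 :=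
  Summable.of_nonneg_of_le (fun i => mul_nonneg (ha₀ i) (sq_nonneg _))
    (fun i => mul_le_mul_of_nonneg_right (haM i) (sq_nonneg _))
    ((φ.hasSum_inner_sq v).summable.mul_left M)

/-- `x ↦ f x + ‖x - y‖² / (2γ)`, whose minimizer is `prox_{γf} y`. -/
noncomputable def proxObjective (lam : ι → ℝ) (γ : ℝ) (y x : H) : ℝ :=
  (∑' i, lam i / 2 * ⟪x, φ i⟫ ^ 2) + 1 / (2 * γ) * ‖x - y‖ ^ 2

variable {φ} {lam : ι → ℝ} {M γ : ℝ}

theorem proxObjective_eq_tsum (hlam₀ : ∀ i, 0 ≤ lam i) (hlamM : ∀ i, lam i ≤ M) (y x : H) :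
    φ.proxObjective lam γ y x =
      ∑' i, (lam i / 2 * ⟪x, φ i⟫ ^ 2 + 1 / (2 * γ) * ⟪x - y, φ i⟫ ^ 2) := by
  rw [proxObjective, ← (φ.hasSum_inner_sq (x - y)).tsum_eq, ← tsum_mul_left,
    ← Summable.tsum_add (φ.summable_mul_inner_sq (M := M / 2) (fun i => by linarith [hlam₀ i])
      (fun i => by linarith [hlamM i]) x) ((φ.hasSum_inner_sq _).summable.mul_left _)]

theorem summable_half_add_mul_inner_sq (hlam₀ : ∀ i, 0 ≤ lam i) (hlamM : ∀ i, lam i ≤ M)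
    (hγ : 0 < γ) (v : H) : Summable fun i => (lam i / 2 + 1 / (2 * γ)) * ⟪v, φ i⟫ ^ 2 :=
  φ.summable_mul_inner_sq (M := M / 2 + 1 / (2 * γ))
    (fun i => by have := hlam₀ i; positivity) (fun i => by linarith [hlamM i]) v

theorem proxObjective_eq_add (hlam₀ : ∀ i, 0 ≤ lam i) (hlamM : ∀ i, lam i ≤ M) (hγ : 0 < γ)
    {y w : H} (hw : ∀ i, (1 + γ * lam i) * ⟪w, φ i⟫ = ⟪y, φ i⟫) (x : H) :
    φ.proxObjective lam γ y x =
      φ.proxObjective lam γ y w + ∑' i, (lam i / 2 + 1 / (2 * γ)) * ⟪x - w, φ i⟫ ^ 2 := by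
  have hquad := summable_half_add_mul_inner_sq (φ := φ) hlam₀ hlamM hγ (x - w)
  have hw_sum : Summable fun i => lam i / 2 * ⟪w, φ i⟫ ^ 2 + 1 / (2 * γ) * ⟪w - y, φ i⟫ ^ 2 :=
    (φ.summable_mul_inner_sq (M := M / 2) (fun i => by linarith [hlam₀ i])
      (fun i => by linarith [hlamM i]) w).add ((φ.hasSum_inner_sq _).summable.mul_left _)
  rw [proxObjective_eq_tsum hlam₀ hlamM, proxObjective_eq_tsum hlam₀ hlamM,
    ← Summable.tsum_add hw_sum hquad]
  refine tsum_congr fun i => ?_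
  simp only [inner_sub_left, ← hw i]
  field_simp
  ring

theorem eq_of_forall_proxObjective_le (hlam₀ : ∀ i, 0 ≤ lam i) (hlamM : ∀ i, lam i ≤ M)
    (hγ : 0 < γ) {y w u : H} (hw : ∀ i, (1 + γ * lam i) * ⟪w, φ i⟫ = ⟪y, φ i⟫)
    (hu : ∀ x, φ.proxObjective lam γ y u ≤ φ.proxObjective lam γ y x) : u = w := by
  have hquad := summable_half_add_mul_inner_sq (φ := φ) hlam₀ hlamM hγ (u - w)
  have hlower : 1 / (2 * γ) * ‖u - w‖ ^ 2 ≤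
      ∑' i, (lam i / 2 + 1 / (2 * γ)) * ⟪u - w, φ i⟫ ^ 2 :=
    hasSum_le (fun i => mul_le_mul_of_nonneg_right (by linarith [hlam₀ i]) (sq_nonneg _))
      ((φ.hasSum_inner_sq (u - w)).mul_left _) hquad.hasSum
  have hupper := (proxObjective_eq_add hlam₀ hlamM hγ hw u).symm.trans_le (hu w)
  have hnorm : ‖u - w‖ ^ 2 = 0 :=
    le_antisymm (nonpos_of_mul_nonpos_right (a := 1 / (2 * γ)) (by linarith) (by positivity))
      (sq_nonneg _)
  rwa [sq_eq_zero_iff, norm_eq_zero, sub_eq_zero] at hnorm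

theorem eq_smul_of_forall_proxObjective_smul_le (hlam₀ : ∀ i, 0 ≤ lam i)
    (hlamM : ∀ i, lam i ≤ M) (hγ : 0 < γ) {j : ι} {c : ℝ} {u : H}
    (hu : ∀ x, φ.proxObjective lam γ (c • φ j) u ≤ φ.proxObjective lam γ (c • φ j) x) :
    u = (c / (1 + γ * lam j)) • φ j := by
  refine eq_of_forall_proxObjective_le hlam₀ hlamM hγ (fun i => ?_) hu
  have hj : 1 + γ * lam j ≠ 0 := by have := hlam₀ j; positivity
  rw [real_inner_smul_left, real_inner_smul_left]
  obtain rfl | hij := eq_or_ne j i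
  · field_simp
  · rw [φ.orthonormal.2 hij, mul_zero, mul_zero, mul_zero]

end HilbertBasis

theorem iterate_apply_eq_pow_smul {R M : Type*} [Monoid R] [MulAction R M] {T : M → M} {v : M}
    {r : R} (hT : ∀ c : R, T (c • v) = (r * c) • v) (k : ℕ) : T^[k] v = r ^ k • v := by
  have hconj : Function.Semiconj (· • v) (r • ·) T := fun c => (hT c).symm
  have hpow : (r • ·)^[k] (1 : R) = r ^ k := by
    rw [smul_iterate]
    exact mul_one _
  rw [← one_smul R v, ← hconj.iterate_right k 1, hpow, one_smul]

theorem iterate_douglasRachford_of_prox_smul {E : Type*} [AddCommGroup E] [Module ℝ E]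
    {P T : E → E} {α s : ℝ} {v : E} (hP : ∀ c : ℝ, P (c • v) = (c * s) • v)
    (hT : ∀ z, T z = (1 - α) • z + α • ((2 : ℝ) • P z - z)) (k : ℕ) :
    T^[k] v = (1 - α + α * (2 * s - 1)) ^ k • v :=
  iterate_apply_eq_pow_smul (fun c => by rw [hT, hP]; module) k

theorem one_le_mul_of_one_div_sqrt_le {σ β γ : ℝ} (hσ : 0 < σ) (hσβ : σ ≤ β)
    (hγ : 1 / Real.sqrt (σ * β) ≤ γ) : 1 ≤ γ ^ 2 * (σ * β) ∧ 1 ≤ γ * β := by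
  have hsqrt : 0 < Real.sqrt (σ * β) := Real.sqrt_pos.2 (by nlinarith)
  have h₁ : 1 ≤ γ * Real.sqrt (σ * β) := by rwa [div_le_iff₀ hsqrt] at hγ
  have h₂ : Real.sqrt (σ * β) ≤ β := Real.sqrt_le_iff.2 ⟨by linarith, by nlinarith⟩
  have hγ₀ : 0 < γ := pos_of_mul_pos_left (by linarith) hsqrt.le
  refine ⟨?_, h₁.trans (mul_le_mul_of_nonneg_left h₂ hγ₀.le)⟩
  calc 1 ≤ (γ * Real.sqrt (σ * β)) ^ 2 := one_le_pow₀ h₁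
    _ = γ ^ 2 * (σ * β) := by rw [mul_pow, Real.sq_sqrt (by nlinarith)]

theorem max_contraction_eq_right {σ β γ : ℝ} (hσ : 0 < σ) (hγ : 0 < γ) (hβ : 0 < β)
    (h : 1 ≤ γ ^ 2 * (σ * β)) :
    max ((1 - γ * σ) / (1 + γ * σ)) ((γ * β - 1) / (1 + γ * β)) = (γ * β - 1) / (1 + γ * β) := by
  refine max_eq_right ((div_le_div_iff₀ (by positivity) (by positivity)).2 ?_)
  nlinarith

theorem abs_douglasRachford_factor {α x : ℝ} (hα : 1 ≤ α) (hx : 1 ≤ x) :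
    |1 - α + α * (2 * (1 + x)⁻¹ - 1)| = |1 - α| + α * ((x - 1) / (1 + x)) := by
  have hfrac : 0 ≤ (x - 1) / (1 + x) := div_nonneg (by linarith) (by linarith)
  have hrw : 2 * (1 + x)⁻¹ - 1 = -((x - 1) / (1 + x)) := by
    field_simp [show 1 + x ≠ 0 by linarith]
    ring
  rw [hrw, abs_of_nonpos (by nlinarith [mul_nonneg (by linarith : (0 : ℝ) ≤ α) hfrac]),
    abs_of_nonpos (by linarith : 1 - α ≤ 0)]
  ring

theorem DR_rate_tight_case_iii_general {H : Type*} [NormedAddCommGroup H] [InnerProductSpace ℝ H]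
    {ι : Type*} (φ : HilbertBasis ι ℝ H)
    (σ β : ℝ) (hσ : 0 < σ) (hσβ : σ ≤ β) (lam : ι → ℝ)
    (hlam : ∀ i, lam i = σ ∨ lam i = β)
    (γ α : ℝ) (hγ : 1 / Real.sqrt (σ * β) ≤ γ)
    (hα₁ : 1 ≤ α)
    (P : H → H)
    (hP : ∀ y x : H,
      (∑' i, lam i / 2 * ⟪P y, φ i⟫ ^ 2) + 1 / (2 * γ) * ‖P y - y‖ ^ 2 ≤
        (∑' i, lam i / 2 * ⟪x, φ i⟫ ^ 2) + 1 / (2 * γ) * ‖x - y‖ ^ 2)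
    (T : H → H)
    (hT : ∀ z : H, T z = (1 - α) • z + α • ((2 : ℝ) • P z - z)) :
    ∀ j : ι, lam j = β → ∀ k : ℕ,
      ‖T^[k] (φ j)‖ =
        (|1 - α| +
          α * max ((1 - γ * σ) / (1 + γ * σ)) ((γ * β - 1) / (1 + γ * β))) ^ k * ‖φ j‖ := by
  intro j hj k
  have hβ : 0 < β := hσ.trans_le hσβ
  obtain ⟨hγσβ, hγβ⟩ := one_le_mul_of_one_div_sqrt_le hσ hσβ hγ
  have hγ₀ : 0 < γ := pos_of_mul_pos_left (by linarith) hβ.le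
  have hlam₀ : ∀ i, 0 ≤ lam i := fun i => by rcases hlam i with h | h <;> linarith
  have hlamβ : ∀ i, lam i ≤ β := fun i => by rcases hlam i with h | h <;> linarith
  have hprox : ∀ c : ℝ, P (c • φ j) = (c * (1 + γ * β)⁻¹) • φ j := fun c => by
    rw [← div_eq_mul_inv, ← hj]
    exact HilbertBasis.eq_smul_of_forall_proxObjective_smul_le hlam₀ hlamβ hγ₀ (hP _)
  rw [iterate_douglasRachford_of_prox_smul hprox hT, norm_smul, norm_pow, Real.norm_eq_abs,
    abs_douglasRachford_factor hα₁ hγβ, max_contraction_eq_right hσ hγ₀ hβ hγσβ]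

/-- Tightness of the Douglas-Rachford rate, case `γ ∈ [1/√(σβ), ∞)`,
`α ∈ [1, 2/(1 + max((1-γσ)/(1+γσ), (γβ-1)/(1+γβ))))`:
with `f(x) = Σ_i (λ i / 2) ⟪x, φ i⟫²` (each `λ i ∈ {σ, β}`, both values attained),
if `P y` minimizes `x ↦ f x + (1/(2γ)) ‖x - y‖²` and
`T z = (1-α) • z + α • (2 • P z - z)`, then for every `j` with `λ j = β` and every `k`,
`‖T^[k] (φ j)‖ = ρ^k ‖φ j‖` where
`ρ = |1-α| + α·max((1-γσ)/(1+γσ), (γβ-1)/(1+γβ))`, so the rate bound `ρ` is tight. -/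
theorem DR_rate_tight_case_iii {H : Type*} [NormedAddCommGroup H] [InnerProductSpace ℝ H]
    [CompleteSpace H] {ι : Type*} (φ : HilbertBasis ι ℝ H)
    (σ β : ℝ) (hσ : 0 < σ) (hσβ : σ ≤ β) (lam : ι → ℝ)
    (hlam : ∀ i, lam i = σ ∨ lam i = β)
    (hIσ : ∃ i, lam i = σ) (hIβ : ∃ i, lam i = β)
    (γ α : ℝ) (hγ : 1 / Real.sqrt (σ * β) ≤ γ)
    (hα₁ : 1 ≤ α)
    (hα₂ : α < 2 / (1 + max ((1 - γ * σ) / (1 + γ * σ)) ((γ * β - 1) / (1 + γ * β))))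
    (P : H → H)
    (hP : ∀ y x : H,
      (∑' i, lam i / 2 * ⟪P y, φ i⟫ ^ 2) + 1 / (2 * γ) * ‖P y - y‖ ^ 2 ≤
        (∑' i, lam i / 2 * ⟪x, φ i⟫ ^ 2) + 1 / (2 * γ) * ‖x - y‖ ^ 2)
    (T : H → H)
    (hT : ∀ z : H, T z = (1 - α) • z + α • ((2 : ℝ) • P z - z)) :
    ∀ j : ι, lam j = β → ∀ k : ℕ,
      ‖T^[k] (φ j)‖ =
        (|1 - α| +
          α * max ((1 - γ * σ) / (1 + γ * σ)) ((γ * β - 1) / (1 + γ * β))) ^ k * ‖φ j‖ :=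
  DR_rate_tight_case_iii_general φ σ β hσ hσβ lam hlam γ α hγ hα₁ P hP T hT
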